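/- arXiv:1412.6639 — 5 statements merged into one kernel-verified Lean document; each statement's English description precedes it below -/
import Mathlib

section
/- If S and T are finite sets of points in general position in ℝ^d with |S| = k-1 and |T| ≥ d·C(k-1, d) + 1 where k > d+1, then there exists a point p ∈ T such that S ∪ {p} is in general position. -/
open Metric Finset
open scoped Classical

noncomputable section

/-- A finite set in `ℝ^d` is in general position if every subset of size at most `d+1`
is affinely independent. -/
def InGenPos (d : ℕ) (X : Finset (EuclideanSpace ℝ (Fin d))) : Prop :=
  ∀ S ⊆ X, S.card ≤ d + 1 →
    AffineIndependent ℝ (fun p : S => (p : EuclideanSpace ℝ (Fin d)))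

/-!
A point `p` keeps `S` in general position as soon as it avoids the affine span of every
`d`-subset of `S`. Such a span contains at most `d` points of `T`, because `d + 1` affinely
independent points never lie in the affine span of only `d` points. So the `C(|S|, d)` spans
together contain at most `d · C(|S|, d) < |T|` points of `T`.
-/

section AffineSpace

variable {k V P : Type*} [DivisionRing k] [AddCommGroup V] [Module k V] [AddTorsor V P]

theorem AffineIndependent.finset_insert_of_notMem_affineSpan [DecidableEq P] {A : Finset P}
    {p : P} (hA : AffineIndependent k ((↑) : A → P)) (hp : p ∉ affineSpan k (A : Set P)) :
    AffineIndependent k ((↑) : ↥(insert p A : Finset P) → P) := by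
  set i : ↥(insert p A : Finset P) := ⟨p, mem_insert_self p A⟩
  have hrest : ∀ x : {y // y ≠ i}, x.1.1 ∈ A := fun x =>
    (mem_insert.1 x.1.2).resolve_left fun h => x.2 (Subtype.ext h)
  refine AffineIndependent.affineIndependent_of_notMem_span (i := i) ?_ ?_
  · refine AffineIndependent.of_set_of_injective (hA.mono ?_) ?_
    · rintro _ ⟨x, rfl⟩
      exact hrest x
    · exact fun x y h => Subtype.ext (Subtype.ext h)
  · refine fun hspan => hp (affineSpan_mono k ?_ hspan)
    rintro _ ⟨x, hx, rfl⟩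
    exact hrest ⟨x, hx⟩

theorem notMem_affineSpan_of_subset_of_card_le {S : Finset P} {n : ℕ} {p : P} (hn : n ≤ #S)
    (hp : ∀ A ∈ S.powersetCard n, p ∉ affineSpan k (A : Set P)) {A : Finset P} (hAS : A ⊆ S)
    (hA : #A ≤ n) : p ∉ affineSpan k (A : Set P) := by
  obtain ⟨B, hAB, hBS, hB⟩ := exists_subsuperset_card_eq hAS hA hn
  exact fun h => hp B (mem_powersetCard.2 ⟨hBS, hB⟩) (affineSpan_mono k (coe_subset.2 hAB) h)

theorem card_filter_mem_affineSpan_le {T A : Finset V} {n : ℕ}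
    (hT : ∀ U ⊆ T, #U ≤ n + 1 → AffineIndependent k ((↑) : U → V)) (hA : #A ≤ n) :
    #(T.filter (· ∈ affineSpan k (A : Set V))) ≤ n := by
  by_contra! h
  obtain ⟨U, hU, hUcard⟩ := exists_subset_card_eq (Nat.succ_le_of_lt h)
  have hUT : U ⊆ T := hU.trans (filter_subset _ _)
  have := (hT U hUT hUcard.le).card_le_card_of_subset_affineSpan fun x hx =>
    (mem_filter.1 (hU hx)).2
  omega

theorem exists_mem_forall_notMem_affineSpan {S T : Finset V} {n : ℕ}
    (hT : ∀ U ⊆ T, #U ≤ n + 1 → AffineIndependent k ((↑) : U → V))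
    (hcard : n * (#S).choose n < #T) :
    ∃ p ∈ T, ∀ A ∈ S.powersetCard n, p ∉ affineSpan k (A : Set V) := by
  by_contra! h
  have hcover :
      T ⊆ (S.powersetCard n).biUnion fun A => T.filter (· ∈ affineSpan k (A : Set V)) :=
    fun p hp => by
      obtain ⟨A, hA, hpA⟩ := h p hp
      exact mem_biUnion.2 ⟨A, hA, mem_filter.2 ⟨hp, hpA⟩⟩
  have hbound := card_biUnion_le_card_mul (S.powersetCard n) _ n fun A hA =>
    card_filter_mem_affineSpan_le hT (mem_powersetCard.1 hA).2.le
  rw [card_powersetCard] at hbound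
  have := card_le_card hcover
  rw [mul_comm] at hcard
  omega

end AffineSpace

theorem InGenPos.insert_of_notMem_affineSpan {d : ℕ} {S : Finset (EuclideanSpace ℝ (Fin d))}
    {p : EuclideanSpace ℝ (Fin d)} (hS : InGenPos d S)
    (hp : ∀ A ⊆ S, #A ≤ d → p ∉ affineSpan ℝ (A : Set (EuclideanSpace ℝ (Fin d)))) :
    InGenPos d (insert p S) := by
  intro A hA hAcard
  by_cases hpA : p ∈ A
  · have hAS : A.erase p ⊆ S := subset_insert_iff.1 hA
    have hcard : #(A.erase p) ≤ d := by rw [card_erase_of_mem hpA]; omega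
    have := (hS _ hAS (by omega)).finset_insert_of_notMem_affineSpan (hp _ hAS hcard)
    rwa [insert_erase hpA] at this
  · exact hS A ((subset_insert_iff_of_notMem hpA).1 hA) hAcard

/-- If `S` and `T` are in general position in `ℝ^d`, `|S| = k-1`, `k > d+1`, and
`|T| ≥ d·C(k-1,d) + 1`, then some `p ∈ T` has `S ∪ {p}` in general position. -/
theorem stmt0 (d k : ℕ) (hk : d + 1 < k)
    (S T : Finset (EuclideanSpace ℝ (Fin d)))
    (hS : InGenPos d S) (hT : InGenPos d T)
    (hScard : S.card = k - 1)
    (hTcard : d * Nat.choose (k - 1) d + 1 ≤ T.card) :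
    ∃ p ∈ T, InGenPos d (insert p S) := by
  obtain ⟨p, hpT, hp⟩ := exists_mem_forall_notMem_affineSpan hT (by rw [hScard]; omega)
  exact ⟨p, hpT, hS.insert_of_notMem_affineSpan fun A hAS hA =>
    notMem_affineSpan_of_subset_of_card_le (by omega) hp hAS hA⟩
end
end

section
/- Let A_d(k) = k if k ≤ d+1 and A_d(k) = d·C(k-1,d)+1 otherwise, and B_d(k) = k(A_d(k)-1)+1. If F = {X_1, …, X_m} is a family of finite sets in ℝ^d such that for every non-empty I ⊆ {1,…,m}, the union ∪_{i∈I} X_i contains at least B_d(|I|) points in general position, then there exist points x_i ∈ X_i for each i such that {x_1,…,x_m} is in general position. -/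
open Metric Finset
open scoped Classical

noncomputable section

/-- `A_d(k)` from the paper. -/
def A (d k : ℕ) : ℕ := if k ≤ d + 1 then k else d * Nat.choose (k - 1) d + 1

/-- `B_d(k) = k(A_d(k)-1)+1` from the paper. -/
def B (d k : ℕ) : ℕ := k * (A d k - 1) + 1

/-!
Induction on the number of sets. The hypothesis for the whole family gives `m (A_d(m) - 1) + 1`
points in general position, so by pigeonhole some `X_i` contains a set `T` of `A_d(m)` of them.
Choose representatives `P` of the other `m - 1` sets by induction. With `q = min(d, m - 1)`, every
subset of `P` of size `≤ d` lies in a `q`-subset, whose affine span has dimension `< q` and so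
contains at most `q` points of `T`. Since `q · C(m - 1, q) < A_d(m)`, some `t ∈ T` lies in none of
these spans, and `P ∪ {t}` is again in general position.
-/

theorem Finset.exists_lt_card_inter_of_mul_lt_card {ι α : Type*} [DecidableEq α] {s : Finset ι}
    {X : ι → Finset α} {S : Finset α} {n : ℕ} (hS : S ⊆ s.biUnion X)
    (h : #s * n < #S) : ∃ i ∈ s, n < #(S ∩ X i) := by
  by_contra! hsmall
  have hcover : S = s.biUnion (fun i => S ∩ X i) := by
    rw [← Finset.inter_biUnion, Finset.inter_eq_left.2 hS]
  have := Finset.card_biUnion_le_card_mul s (fun i => S ∩ X i) n hsmall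
  rw [← hcover] at this
  omega

theorem AffineIndependent.finset_insert {k V P : Type*} [DivisionRing k] [AddCommGroup V]
    [Module k V] [AddTorsor V P] [DecidableEq P] {s : Finset P} {x : P}
    (hs : AffineIndependent k fun y : s => (y : P)) (hx : x ∉ affineSpan k (s : Set P)) :
    AffineIndependent k fun y : ↥(insert x s) => (y : P) := by
  have hmem : ∀ y : {y : (insert x s : Finset P) // y ≠ ⟨x, mem_insert_self x s⟩},
      (y : P) ∈ s := fun ⟨⟨y, hy⟩, hne⟩ =>
    (mem_insert.1 hy).resolve_left fun h => hne (Subtype.ext h)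
  refine AffineIndependent.affineIndependent_of_notMem_span
    (i := ⟨x, mem_insert_self x s⟩) ?_ ?_
  · let f : {y : ↥(insert x s) // y ≠ ⟨x, mem_insert_self x s⟩} ↪ s :=
      ⟨fun y => ⟨y.1.1, hmem y⟩, fun a b h =>
        Subtype.ext <| Subtype.ext <| Subtype.mk.inj h⟩
    exact hs.comp_embedding f
  · refine fun h => hx (affineSpan_mono k ?_ h)
    rintro _ ⟨y, hy, rfl⟩
    exact hmem ⟨y, hy⟩

theorem min_mul_choose_lt_A (d m : ℕ) : min d m * m.choose (min d m) < A d (m + 1) := by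
  unfold A
  rcases le_or_gt m d with h | h
  · rw [if_pos (by omega), min_eq_right h, Nat.choose_self, mul_one]
    omega
  · rw [if_neg (by omega), min_eq_left h.le, Nat.add_sub_cancel]
    omega

section GeneralPosition

variable {d : ℕ}

local notation "E" => EuclideanSpace ℝ (Fin d)

theorem inGenPos_empty : InGenPos d ∅ := by
  intro S hS _
  rw [Finset.subset_empty.1 hS]
  exact affineIndependent_of_subsingleton ℝ _

theorem InGenPos.mono {X Y : Finset E} (h : InGenPos d Y) (hXY : X ⊆ Y) : InGenPos d X :=
  fun S hS hcard => h S (hS.trans hXY) hcard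

theorem InGenPos.insert_of_notMem_affineSpan_s2 {P : Finset E} {t : E} (hP : InGenPos d P)
    (ht : ∀ Q ⊆ P, #Q ≤ d → t ∉ affineSpan ℝ (Q : Set E)) :
    InGenPos d (insert t P) := by
  intro S hS hcard
  have hSP : S.erase t ⊆ P := Finset.subset_insert_iff.1 hS
  by_cases htS : t ∈ S
  · have hcard' : #(S.erase t) ≤ d := by rw [card_erase_of_mem htS]; omega
    rw [← insert_erase htS]
    exact (hP _ hSP (by omega)).finset_insert (ht _ hSP hcard')
  · rw [erase_eq_of_notMem htS] at hSP
    exact hP S hSP hcard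

theorem InGenPos.card_filter_mem_affineSpan_le {T Q : Finset E} (hT : InGenPos d T)
    (hQ : #Q ≤ d) : #(T.filter (· ∈ affineSpan ℝ (Q : Set E))) ≤ #Q := by
  by_contra! hlt
  obtain ⟨R, hR, hRcard⟩ := Finset.exists_subset_card_eq (Nat.succ_le_of_lt hlt)
  have hRind := hT R (hR.trans (filter_subset _ _)) (by omega)
  have hRspan : (R : Set E) ⊆ affineSpan ℝ (Q : Set E) := fun y hy =>
    (mem_filter.1 (hR hy)).2
  have := hRind.card_le_card_of_subset_affineSpan hRspan
  omega

theorem InGenPos.exists_forall_notMem_affineSpan {T : Finset E} (hT : InGenPos d T)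
    (P : Finset E) (hcard : min d #P * (#P).choose (min d #P) < #T) :
    ∃ t ∈ T, ∀ Q ⊆ P, #Q ≤ d → t ∉ affineSpan ℝ (Q : Set E) := by
  set q := min d #P
  by_contra! hbad
  have hcover : T ⊆ (P.powersetCard q).biUnion
      (fun Q => T.filter (· ∈ affineSpan ℝ (Q : Set E))) := by
    intro t htT
    obtain ⟨Q, hQP, hQd, htQ⟩ := hbad t htT
    obtain ⟨Q', hQQ', hQ'P, hQ'card⟩ := Finset.exists_subsuperset_card_eq hQP
      (le_min hQd (card_le_card hQP)) (min_le_right _ _)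
    exact mem_biUnion.2 ⟨Q', mem_powersetCard.2 ⟨hQ'P, hQ'card⟩,
      mem_filter.2 ⟨htT, affineSpan_mono ℝ (coe_subset.2 hQQ') htQ⟩⟩
  have hbound := Finset.card_biUnion_le_card_mul (P.powersetCard q) _ q fun Q hQ => by
    have hQcard : #Q = q := (mem_powersetCard.1 hQ).2
    simpa only [hQcard] using
      hT.card_filter_mem_affineSpan_le (hQcard.trans_le (min_le_left _ _))
  rw [card_powersetCard] at hbound
  have := (card_le_card hcover).trans hbound
  rw [Nat.mul_comm] at this
  omega

theorem InGenPos.exists_insert (hd : 1 ≤ d) {P T : Finset E} (hP : InGenPos d P)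
    (hT : InGenPos d T) (hcard : A d (#P + 1) ≤ #T) :
    ∃ t ∈ T, t ∉ P ∧ InGenPos d (insert t P) := by
  obtain ⟨t, htT, ht⟩ :=
    hT.exists_forall_notMem_affineSpan P ((min_mul_choose_lt_A d #P).trans_le hcard)
  refine ⟨t, htT, fun htP => ?_, hP.insert_of_notMem_affineSpan_s2 ht⟩
  exact ht {t} (singleton_subset_iff.2 htP) (by simpa using hd)
    (mem_affineSpan ℝ (by simp))

theorem exists_inGenPos_transversal (hd : 1 ≤ d) {ι : Type*} (X : ι → Finset E)
    (I : Finset ι) (hyp : ∀ J ⊆ I, J.Nonempty →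
      ∃ S ⊆ J.biUnion X, InGenPos d S ∧ B d #J ≤ #S) :
    ∃ x : ι → E, (∀ i ∈ I, x i ∈ X i) ∧ #(I.image x) = #I ∧ InGenPos d (I.image x) := by
  induction I using Finset.strongInduction with
  | H I ih =>
  rcases I.eq_empty_or_nonempty with rfl | hI
  · exact ⟨0, by simp, by simp, by simpa using inGenPos_empty⟩
  obtain ⟨S, hSX, hS, hScard⟩ := hyp I subset_rfl hI
  obtain ⟨i, hiI, hi⟩ := Finset.exists_lt_card_inter_of_mul_lt_card hSX
    (n := A d #I - 1) (by unfold B at hScard; omega)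
  obtain ⟨x', hx'X, hx'card, hx'⟩ := ih (I.erase i) (erase_ssubset hiI)
    fun J hJ hJne => hyp J (hJ.trans (erase_subset _ _)) hJne
  have hPcard : #((I.erase i).image x') + 1 = #I := by
    rw [hx'card, card_erase_add_one hiI]
  obtain ⟨t, htT, htP, ht⟩ := hx'.exists_insert hd (hS.mono (inter_subset_left (s₂ := X i)))
    (by rw [hPcard]; omega)
  have himage : I.image (Function.update x' i t) = insert t ((I.erase i).image x') := by
    conv_lhs => rw [← insert_erase hiI]
    rw [image_insert, Function.update_self]
    congr 1
    exact image_congr fun j hj => Function.update_of_ne (ne_of_mem_erase hj) _ _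
  refine ⟨Function.update x' i t, fun j hj => ?_, ?_, himage ▸ ht⟩
  · rcases eq_or_ne j i with rfl | hji
    · simpa using (mem_inter.1 htT).2
    · simpa [hji] using hx'X j (mem_erase.2 ⟨hji, hj⟩)
  · rw [himage, card_insert_of_notMem htP, hPcard]

end GeneralPosition

/-- If every union `∪_{i∈I} X_i` contains at least `B_d(|I|)` points in general
position, then the family has a system of general position representatives. -/
theorem stmt2 (d m : ℕ) (hd : 1 ≤ d)
    (X : Fin m → Finset (EuclideanSpace ℝ (Fin d)))
    (hyp : ∀ I : Finset (Fin m), I.Nonempty →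
      ∃ S ⊆ I.biUnion X, InGenPos d S ∧ B d I.card ≤ S.card) :
    ∃ x : Fin m → EuclideanSpace ℝ (Fin d),
      (∀ i, x i ∈ X i) ∧ Function.Injective x ∧
        InGenPos d (Finset.image x Finset.univ) := by
  obtain ⟨x, hxX, hxcard, hx⟩ :=
    exists_inGenPos_transversal hd X univ fun J _ hJ => hyp J hJ
  refine ⟨x, fun i => hxX i (mem_univ i), ?_, hx⟩
  rw [← Set.injOn_univ, ← coe_univ]
  exact Finset.card_image_iff.1 hxcard
end
end

section
/- Let F = {X_1,…,X_m} be a family of finite sets in ℝ^d with m ≤ d+1. If for every non-empty I ⊆ {1,…,m}, φ(∪_{i∈I} X_i) ≥ |I|, then F has a system of general position representatives. -/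
open Metric Finset
open scoped Classical

noncomputable section

/-!
The lift `p ↦ (p, 1)` turns affine independence in `ℝ^d` into linear independence in `ℝ^d × ℝ`.
Since `m ≤ d + 1`, a general-position subset of `⋃_{i ∈ I} X_i` of size `|I|` lifts to `|I|`
linearly independent vectors, so the lifted sets `W_i` satisfy Rado's condition
`|I| ≤ rank (⋃_{i ∈ I} W_i)`. Rado's theorem then gives linearly independent representatives,
i.e. affinely independent points, and every subfamily of those is again affinely independent.

Rado's theorem is proved by shrinking the sets until they are singletons. If neither of two
distinct `e₁, e₂ ∈ W_j` can be deleted, the index sets `I₁, I₂` witnessing this both contain `j`,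
and submodularity of the rank gives
`|I₁ ∪ I₂| + |I₁ ∩ I₂| - 1 ≤ rank (A ∪ B) + rank (A ∩ B) ≤ rank A + rank B ≤ |I₁| + |I₂| - 2`.
-/

section Homogenization

variable {k V ι : Type*} [Ring k] [AddCommGroup V] [Module k V]

theorem affineIndependent_iff_linearIndependent_prod_one (p : ι → V) :
    AffineIndependent k p ↔ LinearIndependent k fun i => (p i, (1 : k)) := by
  have hsum : ∀ (s : Finset ι) (w : ι → k),
      ∑ i ∈ s, w i • (p i, (1 : k)) = (∑ i ∈ s, w i • p i, ∑ i ∈ s, w i) := by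
    intro s w
    ext <;> simp [Prod.fst_sum, Prod.snd_sum]
  rw [affineIndependent_iff, linearIndependent_iff']
  simp only [hsum, Prod.mk_eq_zero]
  exact forall₂_congr fun s w => ⟨fun h hw => h hw.2 hw.1, fun h h1 h2 => h ⟨h2, h1⟩⟩

end Homogenization

section Rank

variable {K V : Type*} [DivisionRing K] [AddCommGroup V] [Module K V] [FiniteDimensional K V]

theorem Set.finrank_union_add_finrank_inter_le (s t : Set V) :
    (s ∪ t).finrank K + (s ∩ t).finrank K ≤ s.finrank K + t.finrank K := by
  have hinter : Submodule.span K (s ∩ t) ≤ Submodule.span K s ⊓ Submodule.span K t :=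
    le_inf (Submodule.span_mono Set.inter_subset_left) (Submodule.span_mono Set.inter_subset_right)
  have := Submodule.finrank_sup_add_finrank_inf_eq (Submodule.span K s) (Submodule.span K t)
  unfold Set.finrank
  rw [Submodule.span_union]
  linarith [Submodule.finrank_mono hinter]

end Rank

namespace Finset

variable {α β : Type*} [DecidableEq α] [DecidableEq β]

theorem update_erase_subset (W : α → Finset β) (j : α) (e : β) (i : α) :
    Function.update W j ((W j).erase e) i ⊆ W i := by
  rcases eq_or_ne i j with rfl | hij
  · simpa using erase_subset e (W i)
  · simp [Function.update_of_ne hij]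

theorem biUnion_update_of_notMem {I : Finset α} {j : α} (hj : j ∉ I) (W : α → Finset β)
    (s : Finset β) : I.biUnion (Function.update W j s) = I.biUnion W :=
  biUnion_congr rfl fun _ hi => Function.update_of_ne (ne_of_mem_of_not_mem hi hj) _ _

theorem biUnion_subset_insert_biUnion_update_erase (I : Finset α) (W : α → Finset β) (j : α)
    (e : β) : I.biUnion W ⊆ insert e (I.biUnion (Function.update W j ((W j).erase e))) := by
  intro x hx
  obtain ⟨i, hi, hxi⟩ := mem_biUnion.1 hx
  rcases eq_or_ne x e with rfl | hxe
  · exact mem_insert_self _ _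
  refine mem_insert_of_mem (mem_biUnion.2 ⟨i, hi, ?_⟩)
  rcases eq_or_ne i j with rfl | hij
  · simp [hxi, hxe]
  · simpa [Function.update_of_ne hij] using hxi

end Finset

section Rado

open Function

variable {K V ι : Type*} [DivisionRing K] [AddCommGroup V] [Module K V] [DecidableEq V]

variable (K) in
def RadoCondition (W : ι → Finset V) : Prop :=
  ∀ I : Finset ι, #I ≤ ((I.biUnion W : Finset V) : Set V).finrank K

namespace RadoCondition

variable {W : ι → Finset V}

theorem nonempty (hW : RadoCondition K W) (i : ι) : (W i).Nonempty := by
  rw [nonempty_iff_ne_empty]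
  intro h
  simpa [h] using hW {i}

theorem exists_linearIndependent_of_card_le_one [Fintype ι] (hW : RadoCondition K W)
    (h : ∀ i, #(W i) ≤ 1) : ∃ x : ι → V, (∀ i, x i ∈ W i) ∧ LinearIndependent K x := by
  choose x hx using fun i => card_eq_one.1 (le_antisymm (h i) (card_pos.2 (hW.nonempty i)))
  refine ⟨x, fun i => by simp [hx i], linearIndependent_iff_card_le_finrank_span.2 ?_⟩
  have hrange : ((univ.biUnion W : Finset V) : Set V) = Set.range x := by
    ext; simp [hx]
  simpa [hrange] using hW univ

variable [DecidableEq ι]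

theorem mem_of_finrank_update_erase_lt (hW : RadoCondition K W) {I : Finset ι} {j : ι} {e : V}
    (hI : ((I.biUnion (update W j ((W j).erase e)) : Finset V) : Set V).finrank K < #I) :
    j ∈ I := by
  by_contra hj
  rw [biUnion_update_of_notMem hj] at hI
  exact hI.not_ge (hW I)

variable [FiniteDimensional K V]

theorem update_erase_or (hW : RadoCondition K W) {j : ι} {e₁ e₂ : V} (h₁ : e₁ ∈ W j)
    (h₂ : e₂ ∈ W j) (hne : e₁ ≠ e₂) :
    RadoCondition K (update W j ((W j).erase e₁)) ∨
      RadoCondition K (update W j ((W j).erase e₂)) := by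
  by_contra! h
  simp only [RadoCondition, not_forall, not_le] at h
  obtain ⟨⟨I₁, hI₁⟩, ⟨I₂, hI₂⟩⟩ := h
  set A := I₁.biUnion (update W j ((W j).erase e₁))
  set B := I₂.biUnion (update W j ((W j).erase e₂))
  have hj₁ : j ∈ I₁ := hW.mem_of_finrank_update_erase_lt hI₁
  have hj₂ : j ∈ I₂ := hW.mem_of_finrank_update_erase_lt hI₂
  have he₁ : e₁ ∈ B := mem_biUnion.2 ⟨j, hj₂, by simp [h₁, hne]⟩
  have he₂ : e₂ ∈ A := mem_biUnion.2 ⟨j, hj₁, by simp [h₂, hne.symm]⟩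
  have hunion : (I₁ ∪ I₂).biUnion W ⊆ A ∪ B := by
    rw [union_biUnion]
    exact union_subset
      ((biUnion_subset_insert_biUnion_update_erase _ _ _ _).trans
        (insert_subset (mem_union_right _ he₁) subset_union_left))
      ((biUnion_subset_insert_biUnion_update_erase _ _ _ _).trans
        (insert_subset (mem_union_left _ he₂) subset_union_right))
  have hinter : ((I₁ ∩ I₂).erase j).biUnion W ⊆ A ∩ B := by
    refine subset_inter ?_ ?_
    · rw [← biUnion_update_of_notMem (notMem_erase j _) W ((W j).erase e₁)]
      exact biUnion_subset_biUnion_of_subset_left _ ((erase_subset _ _).trans inter_subset_left)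
    · rw [← biUnion_update_of_notMem (notMem_erase j _) W ((W j).erase e₂)]
      exact biUnion_subset_biUnion_of_subset_left _ ((erase_subset _ _).trans inter_subset_right)
  have hU := (hW (I₁ ∪ I₂)).trans (Set.finrank_mono (K := K) (by exact_mod_cast hunion))
  have hI := (hW ((I₁ ∩ I₂).erase j)).trans (Set.finrank_mono (K := K) (by exact_mod_cast hinter))
  have hsub := Set.finrank_union_add_finrank_inter_le (K := K) (A : Set V) B
  rw [card_erase_of_mem (mem_inter.2 ⟨hj₁, hj₂⟩)] at hI
  push_cast at hU hI
  have := card_union_add_card_inter I₁ I₂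
  have := card_pos.2 ⟨j, mem_inter.2 ⟨hj₁, hj₂⟩⟩
  omega

/-- **Rado's theorem** for linear matroids. -/
theorem exists_linearIndependent [Fintype ι] (hW : RadoCondition K W) :
    ∃ x : ι → V, (∀ i, x i ∈ W i) ∧ LinearIndependent K x := by
  induction hN : ∑ i, #(W i) using Nat.strong_induction_on generalizing W with
  | _ N ih =>
  by_cases hsmall : ∀ i, #(W i) ≤ 1
  · exact hW.exists_linearIndependent_of_card_le_one hsmall
  push Not at hsmall
  obtain ⟨j, hj⟩ := hsmall
  obtain ⟨e₁, h₁, e₂, h₂, hne⟩ := one_lt_card.1 hj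
  have shrink : ∀ e ∈ W j, RadoCondition K (update W j ((W j).erase e)) →
      ∃ x : ι → V, (∀ i, x i ∈ W i) ∧ LinearIndependent K x := by
    intro e he hWe
    have hlt : ∑ i, #(update W j ((W j).erase e) i) < N := hN ▸ sum_lt_sum
      (fun i _ => card_le_card (update_erase_subset W j e i))
      ⟨j, mem_univ j, by simpa using card_erase_lt_of_mem he⟩
    obtain ⟨x, hx, hlin⟩ := ih _ hlt hWe rfl
    exact ⟨x, fun i => update_erase_subset W j e i (hx i), hlin⟩
  rcases hW.update_erase_or h₁ h₂ hne with h | h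
  exacts [shrink e₁ h₁ h, shrink e₂ h₂ h]

end RadoCondition

end Rado

section GeneralPosition

variable {d : ℕ}

theorem InGenPos.finrank_image_prod_one {S T : Finset (EuclideanSpace ℝ (Fin d))}
    (hS : InGenPos d S) (hTS : T ⊆ S) (hT : #T ≤ d + 1) :
    ((T.image fun p => (p, (1 : ℝ)) : Finset _) : Set (EuclideanSpace ℝ (Fin d) × ℝ)).finrank ℝ
      = #T := by
  have hlin := (affineIndependent_iff_linearIndependent_prod_one _).1 (hS T hTS hT)
  rw [coe_image, Set.image_eq_range]
  exact (finrank_span_eq_card hlin).trans (Fintype.card_coe T)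

theorem radoCondition_image_prod_one {ι : Type*} [Fintype ι] (hι : Fintype.card ι ≤ d + 1)
    (X : ι → Finset (EuclideanSpace ℝ (Fin d)))
    (hX : ∀ I : Finset ι, I.Nonempty → ∃ S ⊆ I.biUnion X, InGenPos d S ∧ #I ≤ #S) :
    RadoCondition ℝ fun i => (X i).image fun p => (p, (1 : ℝ)) := by
  intro I
  rcases I.eq_empty_or_nonempty with rfl | hI
  · simp
  obtain ⟨S, hSX, hS, hIS⟩ := hX I hI
  obtain ⟨T, hTS, hT⟩ := exists_subset_card_eq hIS
  rw [← hT, ← hS.finrank_image_prod_one hTS (hT ▸ (card_le_univ _).trans hι), ← biUnion_image]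
  exact Set.finrank_mono (by exact_mod_cast image_subset_image (hTS.trans hSX))

theorem AffineIndependent.inGenPos_image {ι : Type*} [Fintype ι]
    {x : ι → EuclideanSpace ℝ (Fin d)} (hx : AffineIndependent ℝ x) :
    InGenPos d (univ.image x) :=
  fun _ hS _ => hx.range.mono (by simpa using coe_subset.2 hS)

end GeneralPosition

theorem stmt4_general (d m : ℕ) (hm : m ≤ d + 1)
    (X : Fin m → Finset (EuclideanSpace ℝ (Fin d)))
    (hyp : ∀ I : Finset (Fin m), I.Nonempty →
      ∃ S ⊆ I.biUnion X, InGenPos d S ∧ I.card ≤ S.card) :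
    ∃ x : Fin m → EuclideanSpace ℝ (Fin d),
      (∀ i, x i ∈ X i) ∧ Function.Injective x ∧
        InGenPos d (Finset.image x Finset.univ) := by
  obtain ⟨y, hyX, hy⟩ :=
    (radoCondition_image_prod_one (by simpa using hm) X hyp).exists_linearIndependent
  choose x hxX hxy using fun i => mem_image.1 (hyX i)
  have hx : AffineIndependent ℝ x := by
    rwa [affineIndependent_iff_linearIndependent_prod_one, funext hxy]
  exact ⟨x, hxX, hx.injective, hx.inGenPos_image⟩

/-- For `m ≤ d+1` sets in `ℝ^d`, the Hall-type condition `φ(∪_{i∈I} X_i) ≥ |I|` for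
every non-empty `I` suffices for a system of general position representatives. -/
theorem stmt4 (d m : ℕ) (hd : 1 ≤ d) (hm : m ≤ d + 1)
    (X : Fin m → Finset (EuclideanSpace ℝ (Fin d)))
    (hyp : ∀ I : Finset (Fin m), I.Nonempty →
      ∃ S ⊆ I.biUnion X, InGenPos d S ∧ I.card ≤ S.card) :
    ∃ x : Fin m → EuclideanSpace ℝ (Fin d),
      (∀ i, x i ∈ X i) ∧ Function.Injective x ∧
        InGenPos d (Finset.image x Finset.univ) :=
  stmt4_general d m hm X hyp
end
end

section
/- Let K be a simplicial complex of dimension d on vertex set V and v ∈ V. Then the star of v in the d-completion Δ_d(K) equals the d-completion of the neighborhood complex Γ_K(v). -/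
open Finset
open scoped Classical

/-- An abstract simplicial complex: a downward-closed collection of finite sets. -/
def IsComplex {V : Type*} (K : Set (Finset V)) : Prop :=
  ∀ S ∈ K, ∀ T ⊆ S, T ∈ K

/-- `K` has dimension `d`. -/
def HasDim {V : Type*} (d : ℕ) (K : Set (Finset V)) : Prop :=
  (∀ S ∈ K, S.card ≤ d + 1) ∧ ∃ S ∈ K, S.card = d + 1

/-- The `j`-completion `Δ_j(K)`. -/
def completion {V : Type*} (j : ℕ) (K : Set (Finset V)) : Set (Finset V) :=
  K ∪ {S | j + 2 ≤ S.card ∧ ∀ T ⊆ S, T.card ≤ j + 1 → T ∈ K}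

/-- The star of a vertex `v`: `st_K(v) = {S : S ∪ {v} ∈ K}`. -/
def star {V : Type*} (K : Set (Finset V)) (v : V) : Set (Finset V) :=
  {S | insert v S ∈ K}

/-- The neighborhood complex `Γ_K(v)` of a vertex `v` of a `d`-dimensional complex. -/
def nbhdComplex {V : Type*} (d : ℕ) (K : Set (Finset V)) (v : V) : Set (Finset V) :=
  star K v ∪
    {S | v ∉ S ∧ S ∈ K ∧ S.card = d + 1 ∧ ∀ T ⊆ S, T.card ≤ d → T ∈ star K v}

/-
`S` lies in the star of `Δ_d(K)` when `insert v S` lies in `K` or all its `(≤ d+1)`-subsets do.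
In the second case every `(≤ d+1)`-subset `T` of `insert v S` lies in `Γ_K(v)`: if `insert v T`
is still small it lies in `K`, so `T` is in the star; otherwise `T` is a `(d+1)`-set avoiding `v`
all of whose `d`-subsets span a simplex with `v`. Conversely, every simplex of `Γ_K(v)` lies in
`K`, and a `(d+1)`-simplex of `Γ_K(v)` outside the star becomes, after adding `v`, a `(d+2)`-set
all of whose proper subsets lie in `K`.
-/

theorem Finset.forall_subset_insert_iff {α : Type*} [DecidableEq α] {a : α} {s : Finset α}
    {P : Finset α → Prop} : (∀ t ⊆ insert a s, P t) ↔ ∀ t ⊆ s, P t ∧ P (insert a t) := by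
  refine ⟨fun h t ht => ⟨h t (ht.trans (subset_insert a s)), h _ (insert_subset_insert a ht)⟩,
    fun h t ht => ?_⟩
  by_cases hat : a ∈ t
  · simpa only [insert_erase hat] using (h _ (subset_insert_iff.mp ht)).2
  · exact (h t ((subset_insert_iff_of_notMem hat).mp ht)).1

section SimplicialComplex

variable {V : Type*} {d j : ℕ} {K : Set (Finset V)} {v : V} {S : Finset V}

theorem subset_completion : K ⊆ completion j K := Set.subset_union_left

theorem star_subset_nbhdComplex : star K v ⊆ nbhdComplex d K v := Set.subset_union_left

theorem IsComplex.star_subset (hK : IsComplex K) : star K v ⊆ K :=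
  fun S hS => hK _ hS S (subset_insert v S)

theorem IsComplex.nbhdComplex_subset (hK : IsComplex K) : nbhdComplex d K v ⊆ K :=
  Set.union_subset hK.star_subset fun _ hS => hS.2.1

theorem mem_nbhdComplex_of_forall_subset_insert (hS : S.card ≤ d + 1)
    (h : ∀ T ⊆ insert v S, T.card ≤ d + 1 → T ∈ K) : S ∈ nbhdComplex d K v := by
  by_cases hins : (insert v S).card ≤ d + 1
  · exact star_subset_nbhdComplex (h _ subset_rfl hins)
  have hvS : v ∉ S := fun hv => hins (by rwa [insert_eq_of_mem hv])
  rw [card_insert_of_notMem hvS] at hins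
  refine Or.inr ⟨hvS, h S (subset_insert v S) hS, by omega, fun T hT hTd => ?_⟩
  exact h _ (insert_subset_insert v hT) ((card_insert_le v T).trans (by omega))

theorem star_completion_subset :
    star (completion d K) v ⊆ completion d (nbhdComplex d K v) := by
  rintro S (hSK | ⟨hcard, hsub⟩)
  · exact subset_completion (star_subset_nbhdComplex hSK)
  have small_mem : ∀ T ⊆ insert v S, T.card ≤ d + 1 → T ∈ nbhdComplex d K v :=
    fun T hT hTc => mem_nbhdComplex_of_forall_subset_insert hTc fun U hU =>
      hsub U (hU.trans (insert_subset (mem_insert_self v S) hT))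
  by_cases hS : S.card ≤ d + 1
  · exact subset_completion (small_mem S (subset_insert v S) hS)
  · exact Or.inr ⟨by omega, fun T hT => small_mem T (hT.trans (subset_insert v S))⟩

theorem IsComplex.insert_mem_completion_of_facet (hK : IsComplex K) (hvS : v ∉ S)
    (hSK : S ∈ K) (hScard : S.card = d + 1) (hlink : ∀ T ⊆ S, T.card ≤ d → T ∈ star K v) :
    insert v S ∈ completion d K := by
  refine Or.inr ⟨by rw [card_insert_of_notMem hvS]; omega,
    Finset.forall_subset_insert_iff.mpr fun T hT => ⟨fun _ => hK S hSK T hT, fun hTc => ?_⟩⟩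
  rw [card_insert_of_notMem fun hvT => hvS (hT hvT)] at hTc
  exact hlink T hT (by omega)

theorem IsComplex.insert_mem_completion_of_completion_nbhdComplex (hK : IsComplex K)
    (hcard : d + 2 ≤ S.card) (hsub : ∀ T ⊆ S, T.card ≤ d + 1 → T ∈ nbhdComplex d K v) :
    insert v S ∈ completion d K := by
  refine Or.inr ⟨hcard.trans (card_le_card (subset_insert v S)),
    Finset.forall_subset_insert_iff.mpr fun T hT =>
      ⟨fun hTc => hK.nbhdComplex_subset (hsub T hT hTc), fun hTc => ?_⟩⟩
  -- a `(d+1)`-simplex of `Γ_K(v)` outside the star avoids `v`, so adding `v` makes it too big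
  rcases hsub T hT ((card_le_card (subset_insert v T)).trans hTc) with
    hst | ⟨hvT, -, hTcard, -⟩
  · exact hst
  · rw [card_insert_of_notMem hvT] at hTc
    omega

theorem IsComplex.completion_nbhdComplex_subset (hK : IsComplex K) :
    completion d (nbhdComplex d K v) ⊆ star (completion d K) v := by
  rintro S ((hst | ⟨hvS, hSK, hScard, hlink⟩) | ⟨hcard, hsub⟩)
  · exact subset_completion hst
  · exact hK.insert_mem_completion_of_facet hvS hSK hScard hlink
  · exact hK.insert_mem_completion_of_completion_nbhdComplex hcard hsub

end SimplicialComplex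

theorem stmt7_general {V : Type*} (d : ℕ) (K : Set (Finset V))
    (hK : IsComplex K) (v : V) :
    star (completion d K) v = completion d (nbhdComplex d K v) :=
  star_completion_subset.antisymm hK.completion_nbhdComplex_subset

/-- For a vertex `v` of a `d`-dimensional complex `K`,
`st_{Δ_d(K)}(v) = Δ_d(Γ_K(v))`. -/
theorem stmt7 {V : Type*} (d : ℕ) (K : Set (Finset V))
    (hK : IsComplex K) (hdim : HasDim d K) (v : V) (hv : {v} ∈ K) :
    star (completion d K) v = completion d (nbhdComplex d K v) :=
  stmt7_general d K hK v
end

section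
/- If K is a 2-star simplicial complex of dimension d ≥ 1, then K is path-connected, and consequently its d-completion Δ_d(K) is path-connected. -/
open Metric Finset
open scoped Classical

noncomputable section

/-- The vertex set of a complex. -/
def vertices {V : Type*} (K : Set (Finset V)) : Set V := {v | {v} ∈ K}

/-- `K` (of dimension `d`) is `q`-star. -/
def IsQStar {V : Type*} (d q : ℕ) (K : Set (Finset V)) : Prop :=
  q < (vertices K).ncard ∧
  ∀ Y : Finset V, ↑Y ⊆ vertices K → Y.card = q →
    ∃ v ∈ vertices K, v ∉ Y ∧
      ∀ S ∈ K, S ⊆ Y → S.card ≤ d → insert v S ∈ K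

/-- Geometric realization of an abstract simplicial complex on a finite vertex set. -/
def realization {V : Type*} [Fintype V] (K : Set (Finset V)) : Set (V → ℝ) :=
  {f | (∀ v, 0 ≤ f v) ∧ (∑ v, f v = 1) ∧ ∃ S ∈ K, ∀ v, f v ≠ 0 → v ∈ S}

section Aux

variable {V : Type*} [Fintype V]

/-- The indicator point of a vertex. -/
def deltaPt (x : V) : V → ℝ := fun w => if w = x then 1 else 0

/-- The closed face corresponding to a finset `S`. -/
def face (S : Finset V) : Set (V → ℝ) :=
  {f | (∀ v, 0 ≤ f v) ∧ (∑ v, f v = 1) ∧ ∀ v, f v ≠ 0 → v ∈ S}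

lemma deltaPt_mem_face {x : V} {S : Finset V} (hx : x ∈ S) : deltaPt x ∈ face S := by
  refine ⟨?_, ?_, ?_⟩
  · intro v; unfold deltaPt; split <;> norm_num
  · simp [deltaPt]
  · intro v hv
    by_contra h
    apply hv
    unfold deltaPt
    split
    · next he => exact absurd (he ▸ hx) h
    · rfl

lemma face_convex (S : Finset V) : Convex ℝ (face S) := by
  rintro f ⟨hf0, hf1, hfS⟩ g ⟨hg0, hg1, hgS⟩ a b ha hb hab
  refine ⟨?_, ?_, ?_⟩
  · intro v
    have := hf0 v; have := hg0 v
    have : 0 ≤ a * f v + b * g v := by positivity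
    simpa using this
  · have : ∑ v, (a * f v + b * g v) = a * (∑ v, f v) + b * (∑ v, g v) := by
      rw [Finset.sum_add_distrib, Finset.mul_sum, Finset.mul_sum]
    simpa [this, hf1, hg1] using hab
  · intro v hv
    by_contra h
    apply hv
    have h1 : f v = 0 := by by_contra h'; exact h (hfS v h')
    have h2 : g v = 0 := by by_contra h'; exact h (hgS v h')
    simp [h1, h2]

lemma face_subset {L : Set (Finset V)} {S : Finset V} (hS : S ∈ L) :
    face S ⊆ realization L := by
  rintro f ⟨h0, h1, h2⟩
  exact ⟨h0, h1, S, hS, h2⟩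

lemma joinedIn_of_face {L : Set (Finset V)} {S : Finset V} (hS : S ∈ L)
    {f g : V → ℝ} (hf : f ∈ face S) (hg : g ∈ face S) :
    JoinedIn (realization L) f g := by
  have hpc : IsPathConnected (face S) := (face_convex S).isPathConnected ⟨f, hf⟩
  exact (hpc.joinedIn f hf g hg).mono (face_subset hS)

lemma realization_pathConnected {L : Set (Finset V)}
    (hvert : ∀ S ∈ L, ∀ x ∈ S, ({x} : Finset V) ∈ L)
    (hconn : ∀ x y : V, ({x} : Finset V) ∈ L → ({y} : Finset V) ∈ L →
      ∃ v, ({v, x} : Finset V) ∈ L ∧ ({v, y} : Finset V) ∈ L)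
    (hne : (realization L).Nonempty) :
    IsPathConnected (realization L) := by
  have key : ∀ f ∈ realization L, ∃ x, ({x} : Finset V) ∈ L ∧
      JoinedIn (realization L) f (deltaPt x) := by
    rintro f ⟨h0, h1, S, hS, h2⟩
    have hx : ∃ x, f x ≠ 0 := by
      by_contra h
      push_neg at h
      simp [h] at h1
    obtain ⟨x, hx⟩ := hx
    have hxS : x ∈ S := h2 x hx
    refine ⟨x, hvert S hS x hxS, ?_⟩
    exact joinedIn_of_face hS ⟨h0, h1, h2⟩ (deltaPt_mem_face hxS)
  obtain ⟨f0, hf0⟩ := hne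
  refine ⟨f0, hf0, ?_⟩
  intro g hg
  obtain ⟨x, hxL, hjx⟩ := key f0 hf0
  obtain ⟨y, hyL, hjy⟩ := key g hg
  obtain ⟨v, hvx, hvy⟩ := hconn x y hxL hyL
  have j1 : JoinedIn (realization L) (deltaPt x) (deltaPt v) :=
    joinedIn_of_face hvx (deltaPt_mem_face (by simp)) (deltaPt_mem_face (by simp))
  have j2 : JoinedIn (realization L) (deltaPt v) (deltaPt y) :=
    joinedIn_of_face hvy (deltaPt_mem_face (by simp)) (deltaPt_mem_face (by simp))
  exact (hjx.trans ((j1.trans j2).trans hjy.symm))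

end Aux

/-- A 2-star complex of dimension `d ≥ 1` is path-connected, and consequently so is
its `d`-completion. -/
theorem stmt15 {V : Type*} [Fintype V] (d : ℕ) (hd : 1 ≤ d) (K : Set (Finset V))
    (hK : IsComplex K) (hdim : HasDim d K) (hstar : IsQStar d 2 K) :
    PathConnectedSpace (realization K) ∧
      PathConnectedSpace (realization (completion d K)) := by
  -- vertices of faces are in K
  have hvertK : ∀ S ∈ K, ∀ x ∈ S, ({x} : Finset V) ∈ K := by
    intro S hS x hx
    exact hK S hS {x} (by simpa using hx)
  -- two-step connectivity between vertices of K
  have hconnK : ∀ x y : V, ({x} : Finset V) ∈ K → ({y} : Finset V) ∈ K →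
      ∃ v, ({v, x} : Finset V) ∈ K ∧ ({v, y} : Finset V) ∈ K := by
    intro x y hx hy
    by_cases hxy : x = y
    · subst hxy
      exact ⟨x, by simpa using hx, by simpa using hx⟩
    · obtain ⟨v, hvV, hvY, hv⟩ := hstar.2 {x, y}
        (by
          intro z hz
          simp only [Finset.coe_insert, Finset.coe_singleton, Set.mem_insert_iff,
            Set.mem_singleton_iff] at hz
          rcases hz with rfl | rfl
          · exact hx
          · exact hy)
        (by rw [Finset.card_insert_of_notMem (by simpa using hxy), Finset.card_singleton])
      have h1 : insert v {x} ∈ K := hv {x} hx (by simp) (by simpa using hd)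
      have h2 : insert v {y} ∈ K := hv {y} hy (by simp) (by simpa using hd)
      exact ⟨v, h1, h2⟩
  -- nonemptiness
  obtain ⟨S0, hS0, hS0card⟩ := hdim.2
  have hS0ne : S0.Nonempty := by
    rw [← Finset.card_pos, hS0card]; omega
  obtain ⟨x0, hx0⟩ := hS0ne
  have hx0K : ({x0} : Finset V) ∈ K := hvertK S0 hS0 x0 hx0
  have hneK : (realization K).Nonempty :=
    ⟨deltaPt x0, face_subset hx0K (deltaPt_mem_face (by simp))⟩
  have hKsub : K ⊆ completion d K := Set.subset_union_left
  -- singletons in the completion are in K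
  have hsingle : ∀ x : V, ({x} : Finset V) ∈ completion d K → ({x} : Finset V) ∈ K := by
    intro x hx
    rcases hx with hx | hx
    · exact hx
    · exfalso
      have := hx.1
      simp only [Finset.card_singleton] at this
      omega
  have hvertC : ∀ S ∈ completion d K, ∀ x ∈ S, ({x} : Finset V) ∈ completion d K := by
    intro S hS x hx
    rcases hS with hS | hS
    · exact hKsub (hvertK S hS x hx)
    · exact hKsub (hS.2 {x} (by simpa using hx) (by simp))
  have hconnC : ∀ x y : V, ({x} : Finset V) ∈ completion d K →
      ({y} : Finset V) ∈ completion d K →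
      ∃ v, ({v, x} : Finset V) ∈ completion d K ∧ ({v, y} : Finset V) ∈ completion d K := by
    intro x y hx hy
    obtain ⟨v, h1, h2⟩ := hconnK x y (hsingle x hx) (hsingle y hy)
    exact ⟨v, hKsub h1, hKsub h2⟩
  have hneC : (realization (completion d K)).Nonempty :=
    ⟨deltaPt x0, face_subset (hKsub hx0K) (deltaPt_mem_face (by simp))⟩
  constructor
  · exact isPathConnected_iff_pathConnectedSpace.mp
      (realization_pathConnected hvertK hconnK hneK)
  · exact isPathConnected_iff_pathConnectedSpace.mp
      (realization_pathConnected hvertC hconnC hneC)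
end
end
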